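/- arXiv:1201.1937 — 5 statements merged into one kernel-verified Lean document; each statement's English description precedes it below -/
import Mathlib

section
/- Let ι be a finite type, l a positive natural number, f : ι → Fin l, and let A be a square real matrix indexed by ι with nonnegative entries that is block lower triangular with respect to f (A i j = 0 whenever f i < f j), and such that each nonempty diagonal-block submatrix A|_{f⁻¹(p)} is irreducible. Suppose there exist C₁, C₂ > 0 and ρ > 1 with C₁·ρ^n ≤ S(A^n) ≤ C₂·ρ^n for all n ≥ 1. Let T ⊆ ι be the union of the blocks f⁻¹(p) whose submatrix has spectral radius equal to ρ (the contributing components). Then the submatrix A|_{ι∖T} has spectral radius ρ₁ strictly less than ρ, and consequently for every ρ' with ρ₁ < ρ' there exists C > 0 such that S((A|_{ι∖T})^n) ≤ C·(ρ')^n for all n ≥ 1. -/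
open scoped BigOperators

attribute [local instance] Classical.propDecidable

/-- The sum of all entries of a square matrix. -/
def entrySum {ι : Type*} [Fintype ι] (B : Matrix ι ι ℝ) : ℝ := ∑ i, ∑ j, B i j

/-- The submatrix of `A` with both indices restricted to the set `s`. -/
def subMat {ι : Type*} (A : Matrix ι ι ℝ) (s : Set ι) : Matrix s s ℝ :=
  A.submatrix Subtype.val Subtype.val

/-- A nonnegative square matrix `B` is irreducible if for all indices `i, j` some power of `B`
has strictly positive `(i,j)` entry. -/
def MatIrreducible {κ : Type*} [Fintype κ] [DecidableEq κ] (B : Matrix κ κ ℝ) : Prop :=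
  ∀ i j, ∃ m : ℕ, 1 ≤ m ∧ 0 < (B ^ m) i j

/-- The spectral radius of a real square matrix: the spectral radius (supremum of the moduli
of the complex eigenvalues) of the matrix viewed as a complex matrix. -/
noncomputable def matrixSpectralRadius {ι : Type*} [Fintype ι] [DecidableEq ι]
    (A : Matrix ι ι ℝ) : ENNReal :=
  spectralRadius ℂ (A.map (Complex.ofReal ·))

/-!
Every principal submatrix of the nonnegative matrix `A` has entry sums of powers bounded by
those of `A`, hence by `C₂ ρⁿ`; since these sums dominate a submultiplicative norm of the powers,
Gelfand's spectral-radius bound gives spectral radius `≤ ρ` for every diagonal block, so the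
blocks outside `T` have spectral radius `< ρ`. The matrix `A|_{ι∖T}` is again block triangular,
its characteristic polynomial is the product of those of its diagonal blocks, and these are
exactly the blocks outside `T`; so its spectral radius is a maximum of finitely many numbers
`< ρ`. Gelfand's formula, read the other way, turns `ρ₁ < ρ'` into the bound `O(ρ'ⁿ)`.
-/

open Filter Asymptotics

lemma le_of_forall_pow_le_mul_pow {x r c : ℝ} (hr : 0 < r)
    (h : ∀ n, 1 ≤ n → x ^ n ≤ c * r ^ n) : x ≤ r := by
  by_contra! hrx
  have hxr : 1 < x / r := (one_lt_div hr).2 hrx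
  obtain ⟨n, hn⟩ := pow_unbounded_of_one_lt c hxr
  have hle : (x / r) ^ (n + 1) ≤ c := by
    rw [div_pow, div_le_iff₀ (by positivity)]
    exact h (n + 1) le_add_self
  have hmono : (x / r) ^ n ≤ (x / r) ^ (n + 1) := pow_le_pow_right₀ hxr.le n.le_succ
  linarith

lemma sum_subtype_le_sum {ι M : Type*} [Fintype ι] [AddCommMonoid M] [Preorder M]
    [AddLeftMono M] (s : Set ι) [Fintype s] {g : ι → M} (hg : ∀ i, 0 ≤ g i) :
    ∑ i : s, g i ≤ ∑ i, g i :=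
  (Finset.sum_set_coe s).trans_le (Finset.sum_le_univ_sum_of_nonneg hg)

namespace spectrum

theorem spectralRadius_le_of_norm_pow_le {𝕜 A : Type*} [NormedField 𝕜] [NormedRing A]
    [NormedAlgebra 𝕜 A] [CompleteSpace A] {a : A} {c r : ℝ} (hr : 0 < r)
    (h : ∀ n, 1 ≤ n → ‖a ^ n‖ ≤ c * r ^ n) : spectralRadius 𝕜 a ≤ ENNReal.ofReal r := by
  refine iSup₂_le fun μ hμ => ?_
  rw [← ENNReal.ofReal_coe_nnreal, coe_nnnorm]
  refine ENNReal.ofReal_le_ofReal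
    (le_of_forall_pow_le_mul_pow hr (c := c * ‖(1 : A)‖) fun n hn => ?_)
  calc ‖μ‖ ^ n = ‖μ ^ n‖ := (norm_pow μ n).symm
    _ ≤ ‖a ^ n‖ * ‖(1 : A)‖ := norm_le_norm_mul_of_mem (pow_mem_pow a n hμ)
    _ ≤ c * r ^ n * ‖(1 : A)‖ := by gcongr; exact h n hn
    _ = c * ‖(1 : A)‖ * r ^ n := by ring

theorem isBigO_pow_of_spectralRadius_lt {A : Type*} [NormedRing A] [NormedAlgebra ℂ A]
    [CompleteSpace A] {a : A} {r : ℝ} (h : spectralRadius ℂ a < ENNReal.ofReal r) :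
    (fun n => a ^ n) =O[atTop] (fun n => r ^ n) := by
  have hr : 0 < r := ENNReal.ofReal_pos.1 (pos_of_gt h)
  refine IsBigO.of_bound 1 ?_
  filter_upwards [(pow_norm_pow_one_div_tendsto_nhds_spectralRadius a).eventually_lt_const h,
    eventually_ge_atTop 1] with n hn hn1
  rw [ENNReal.ofReal_lt_ofReal_iff hr, one_div,
    Real.rpow_inv_lt_iff_of_pos (norm_nonneg _) hr.le (by exact_mod_cast hn1),
    Real.rpow_natCast] at hn
  rw [one_mul, Real.norm_of_nonneg (by positivity)]
  exact hn.le

end spectrum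

namespace Matrix

section LinftyOp

variable {m n α : Type*} [Fintype m] [Fintype n] [SeminormedAddCommGroup α]

attribute [local instance] Matrix.linftyOpSeminormedAddCommGroup

lemma linfty_opNorm_le_sum_norm (B : Matrix m n α) : ‖B‖ ≤ ∑ i, ∑ j, ‖B i j‖ := by
  have : ‖B‖₊ ≤ ∑ i, ∑ j, ‖B i j‖₊ := by
    rw [linfty_opNNNorm_def]
    exact Finset.sup_le fun i hi =>
      Finset.single_le_sum (f := fun i => ∑ j, ‖B i j‖₊) (fun _ _ => zero_le) hi
  simpa using NNReal.coe_le_coe.2 this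

lemma sum_norm_le_card_mul_linfty_opNorm (B : Matrix m n α) :
    ∑ i, ∑ j, ‖B i j‖ ≤ Fintype.card m * ‖B‖ := by
  have : ∑ i, ∑ j, ‖B i j‖₊ ≤ Fintype.card m * ‖B‖₊ := by
    rw [← nsmul_eq_mul, linfty_opNNNorm_def]
    exact Finset.sum_le_card_nsmul _ _ _ fun i hi =>
      Finset.le_sup (f := fun i => ∑ j, ‖B i j‖₊) hi
  simpa using NNReal.coe_le_coe.2 this

end LinftyOp

-- The binder `[DecidableEq α]` makes the `Fintype` instance of the blocks the one that instance
-- search finds at the use site, instead of one built from the ambient `Classical.propDecidable`.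
theorem BlockTriangular.exists_mem_spectrum_toSquareBlock {K m α : Type*} [Field K]
    [Fintype m] [DecidableEq m] [LinearOrder α] [DecidableEq α] {M : Matrix m m K}
    {b : m → α} (hM : M.BlockTriangular b) {μ : K} (hμ : μ ∈ spectrum K M) :
    ∃ i, μ ∈ spectrum K (M.toSquareBlock b (b i)) := by
  rw [mem_spectrum_iff_isRoot_charpoly, hM.charpoly, Polynomial.IsRoot.def,
    Polynomial.eval_prod, Finset.prod_eq_zero_iff] at hμ
  obtain ⟨a, ha, hroot⟩ := hμ
  simp only [Finset.mem_image, Finset.mem_univ, true_and] at ha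
  obtain ⟨i, rfl⟩ := ha
  exact ⟨i, mem_spectrum_iff_isRoot_charpoly.2 (Polynomial.IsRoot.def.2 (by convert hroot))⟩

end Matrix

section EntrySum

variable {κ : Type*} [Fintype κ]

attribute [local instance] Matrix.linftyOpNormedRing Matrix.linftyOpNormedAlgebra

lemma map_ofReal_pow [DecidableEq κ] (M : Matrix κ κ ℝ) (n : ℕ) :
    (M ^ n).map (Complex.ofReal ·) = M.map (Complex.ofReal ·) ^ n :=
  Matrix.map_pow M Complex.ofRealHom n

lemma entrySum_le_sum_norm_map_ofReal (M : Matrix κ κ ℝ) :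
    entrySum M ≤ ∑ i, ∑ j, ‖M.map (Complex.ofReal ·) i j‖ := by
  unfold entrySum
  gcongr with i _ j _
  simpa using le_abs_self (M i j)

lemma sum_norm_map_ofReal_eq_entrySum {M : Matrix κ κ ℝ} (hM : ∀ i j, 0 ≤ M i j) :
    ∑ i, ∑ j, ‖M.map (Complex.ofReal ·) i j‖ = entrySum M := by
  simp [entrySum, abs_of_nonneg (hM _ _)]

lemma matrixSpectralRadius_le_of_entrySum_pow_le [DecidableEq κ] {M : Matrix κ κ ℝ}
    (hM : ∀ i j, 0 ≤ M i j) {c r : ℝ} (hr : 0 < r)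
    (h : ∀ n, 1 ≤ n → entrySum (M ^ n) ≤ c * r ^ n) :
    matrixSpectralRadius M ≤ ENNReal.ofReal r := by
  refine spectrum.spectralRadius_le_of_norm_pow_le (c := c) hr fun n hn => ?_
  calc ‖M.map (Complex.ofReal ·) ^ n‖ = ‖(M ^ n).map (Complex.ofReal ·)‖ := by
        rw [map_ofReal_pow]
    _ ≤ ∑ i, ∑ j, ‖(M ^ n).map (Complex.ofReal ·) i j‖ := Matrix.linfty_opNorm_le_sum_norm _
    _ = entrySum (M ^ n) := sum_norm_map_ofReal_eq_entrySum (Matrix.pow_apply_nonneg hM n)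
    _ ≤ c * r ^ n := h n hn

lemma exists_entrySum_pow_le_of_matrixSpectralRadius_lt [DecidableEq κ] {M : Matrix κ κ ℝ}
    {r : ℝ} (h : matrixSpectralRadius M < ENNReal.ofReal r) :
    ∃ C, 0 < C ∧ ∀ n, entrySum (M ^ n) ≤ C * r ^ n := by
  have hr : 0 < r := ENNReal.ofReal_pos.1 (pos_of_gt h)
  obtain ⟨C, hC, hbound⟩ :=
    bound_of_isBigO_nat_atTop (spectrum.isBigO_pow_of_spectralRadius_lt h)
  refine ⟨(Fintype.card κ + 1) * C, by positivity, fun n => ?_⟩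
  have hpow : ‖M.map (Complex.ofReal ·) ^ n‖ ≤ C * r ^ n := by
    simpa [abs_of_pos hr] using hbound (pow_ne_zero n hr.ne')
  calc entrySum (M ^ n) ≤ ∑ i, ∑ j, ‖(M ^ n).map (Complex.ofReal ·) i j‖ :=
        entrySum_le_sum_norm_map_ofReal _
    _ ≤ Fintype.card κ * ‖(M ^ n).map (Complex.ofReal ·)‖ :=
        Matrix.sum_norm_le_card_mul_linfty_opNorm _
    _ ≤ Fintype.card κ * (C * r ^ n) := by rw [map_ofReal_pow]; gcongr
    _ ≤ (Fintype.card κ + 1) * C * r ^ n := by nlinarith [pow_pos hr n]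

end EntrySum

section SubMat

variable {ι : Type*} [Fintype ι] [DecidableEq ι] {A : Matrix ι ι ℝ}

lemma subMat_pow_apply_le (hA : ∀ i j, 0 ≤ A i j) (s : Set ι) [Fintype s] (n : ℕ)
    (i j : s) : (subMat A s ^ n) i j ≤ (A ^ n) i j := by
  induction n generalizing j with
  | zero => by_cases h : i = j <;> simp [h, Subtype.val_injective.ne]
  | succ n ih =>
    rw [pow_succ, pow_succ, Matrix.mul_apply, Matrix.mul_apply]
    calc ∑ k : s, (subMat A s ^ n) i k * A k j
        ≤ ∑ k : s, (A ^ n) i k * A k j := by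
          gcongr with k
          · exact hA _ _
          · exact ih k
      _ ≤ ∑ k, (A ^ n) i k * A k j :=
          sum_subtype_le_sum s (g := fun k => (A ^ n) i k * A k j) fun k =>
            mul_nonneg (Matrix.pow_apply_nonneg hA n _ _) (hA _ _)

lemma entrySum_subMat_pow_le (hA : ∀ i j, 0 ≤ A i j) (s : Set ι) [Fintype s] (n : ℕ) :
    entrySum (subMat A s ^ n) ≤ entrySum (A ^ n) := by
  have hpow := Matrix.pow_apply_nonneg hA n
  calc entrySum (subMat A s ^ n) ≤ ∑ i : s, ∑ j : s, (A ^ n) i j := by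
        unfold entrySum
        gcongr with i _ j _
        exact subMat_pow_apply_le hA s n i j
    _ ≤ ∑ i : s, ∑ j, (A ^ n) i j := by
        gcongr with i _
        exact sum_subtype_le_sum s (hpow i)
    _ ≤ entrySum (A ^ n) :=
        sum_subtype_le_sum s fun i => Finset.sum_nonneg fun j _ => hpow i j

end SubMat

section Blocks

variable {ι α : Type*} [LinearOrder α] {f : ι → α} {A : Matrix ι ι ℝ}

-- Lower block triangular with respect to `f` is Mathlib's (upper) `BlockTriangular` with
-- respect to `toDual ∘ f`.
lemma blockTriangular_map_subMat (htri : ∀ i j, f i < f j → A i j = 0) (s : Set ι) :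
    ((subMat A s).map (Complex.ofReal ·)).BlockTriangular fun x : s => OrderDual.toDual (f x) :=
  fun x y hxy => by simp [subMat, htri _ _ hxy]

-- With `[DecidableEq α]`, the sets `{j | f j = f i}` carry the same decidability instance as
-- in the statement of the theorem (e.g. `instDecidableEqFin`), not `Classical.propDecidable`.
variable [Fintype ι] [DecidableEq ι] [DecidableEq α]

lemma spectrum_map_subMat_subset (htri : ∀ i j, f i < f j → A i j = 0) {s : Set ι}
    [Fintype s] (hs : ∀ i j, f i = f j → i ∈ s → j ∈ s) :
    spectrum ℂ ((subMat A s).map (Complex.ofReal ·)) ⊆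
      ⋃ i ∈ s, spectrum ℂ ((subMat A {j | f j = f i}).map (Complex.ofReal ·)) := by
  intro μ hμ
  obtain ⟨i, hi⟩ := (blockTriangular_map_subMat htri s).exists_mem_spectrum_toSquareBlock hμ
  let e : {x : s // OrderDual.toDual (f x) = OrderDual.toDual (f i)} ≃ {j | f j = f i} :=
    { toFun := fun x => ⟨x.1, x.2⟩
      invFun := fun j => ⟨⟨j, hs _ _ j.2.symm i.2⟩, j.2⟩
      left_inv := fun _ => rfl
      right_inv := fun _ => rfl }
  refine Set.mem_biUnion i.2 ?_
  rw [Matrix.mem_spectrum_iff_isRoot_charpoly] at hi ⊢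
  convert hi using 1
  convert Matrix.charpoly_reindex e _ using 2
  ext x y
  rfl

lemma matrixSpectralRadius_subMat_le_sup (htri : ∀ i j, f i < f j → A i j = 0) {s : Set ι}
    [Fintype s] (hs : ∀ i j, f i = f j → i ∈ s → j ∈ s) :
    matrixSpectralRadius (subMat A s) ≤
      (Finset.univ.filter (· ∈ s)).sup
        fun i => matrixSpectralRadius (subMat A {j | f j = f i}) := by
  refine iSup₂_le fun μ hμ => ?_
  obtain ⟨i, hi, hμi⟩ := Set.mem_iUnion₂.1 (spectrum_map_subMat_subset htri hs hμ)
  have hμ_le : (‖μ‖₊ : ENNReal) ≤ matrixSpectralRadius (subMat A {j | f j = f i}) :=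
    le_iSup₂ (f := fun μ _ => (‖μ‖₊ : ENNReal)) μ hμi
  exact hμ_le.trans (Finset.le_sup (f := fun i => matrixSpectralRadius (subMat A {j | f j = f i}))
    (by simpa using hi))

end Blocks

theorem spectralRadius_outside_contributing_lt_general
    {ι : Type*} [Fintype ι] [DecidableEq ι] (l : ℕ)
    (f : ι → Fin l) (A : Matrix ι ι ℝ)
    (hA : ∀ i j, 0 ≤ A i j)
    (htri : ∀ i j, f i < f j → A i j = 0)
    (C₁ C₂ ρ : ℝ) (hρ : 1 < ρ)
    (hgrow : ∀ n : ℕ, 1 ≤ n →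
      C₁ * ρ ^ n ≤ entrySum (A ^ n) ∧ entrySum (A ^ n) ≤ C₂ * ρ ^ n)
    (T : Set ι)
    (hT : T = {i | matrixSpectralRadius (subMat A {j | f j = f i}) = ENNReal.ofReal ρ}) :
    matrixSpectralRadius (subMat A Tᶜ) < ENNReal.ofReal ρ ∧
    ∀ ρ' : ℝ, (matrixSpectralRadius (subMat A Tᶜ)).toReal < ρ' →
      ∃ C : ℝ, 0 < C ∧ ∀ n : ℕ, 1 ≤ n → entrySum ((subMat A Tᶜ) ^ n) ≤ C * ρ' ^ n := by
  have hρ0 : 0 < ρ := by linarith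
  have hblock (i : ι) : matrixSpectralRadius (subMat A {j | f j = f i}) ≤ ENNReal.ofReal ρ :=
    matrixSpectralRadius_le_of_entrySum_pow_le (c := C₂) (fun _ _ => hA _ _) hρ0 fun n hn =>
      (entrySum_subMat_pow_le hA _ n).trans (hgrow n hn).2
  have hTc_blocks : ∀ i j, f i = f j → i ∈ Tᶜ → j ∈ Tᶜ := by
    intro i j hij
    rw [hT]
    simp only [Set.mem_compl_iff, Set.mem_ofPred_eq]
    rw [hij]
    exact id
  have hlt : matrixSpectralRadius (subMat A Tᶜ) < ENNReal.ofReal ρ :=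
    (matrixSpectralRadius_subMat_le_sup htri hTc_blocks).trans_lt
      ((Finset.sup_lt_iff (ENNReal.ofReal_pos.2 hρ0)).2 fun i hi =>
        (hblock i).lt_of_ne (by simpa [hT] using hi))
  refine ⟨hlt, fun ρ' hρ' => ?_⟩
  obtain ⟨C, hC, hbound⟩ := exists_entrySum_pow_le_of_matrixSpectralRadius_lt
    ((ENNReal.lt_ofReal_iff_toReal_lt hlt.ne_top).2 hρ')
  exact ⟨C, hC, fun n _ => hbound n⟩

/-- Part (d) of Proposition 2: for a nonnegative block lower triangular matrix `A` with
irreducible diagonal blocks and entry sums of powers growing like `ρ^n` (`ρ > 1`), the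
submatrix obtained by deleting the contributing components (blocks of spectral radius `ρ`)
has spectral radius `ρ₁ < ρ`; consequently for every `ρ' > ρ₁` the entry sums of its powers
are bounded by `C (ρ')^n`, i.e. the number of paths avoiding the contributing components
grows not faster than `ρ₁^n`. -/
theorem spectralRadius_outside_contributing_lt
    {ι : Type*} [Fintype ι] [DecidableEq ι] (l : ℕ) (hl : 0 < l)
    (f : ι → Fin l) (A : Matrix ι ι ℝ)
    (hA : ∀ i j, 0 ≤ A i j)
    (htri : ∀ i j, f i < f j → A i j = 0)
    (hirr : ∀ p : Fin l, (∃ i, f i = p) → MatIrreducible (subMat A {i | f i = p}))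
    (C₁ C₂ ρ : ℝ) (hC₁ : 0 < C₁) (hC₂ : 0 < C₂) (hρ : 1 < ρ)
    (hgrow : ∀ n : ℕ, 1 ≤ n →
      C₁ * ρ ^ n ≤ entrySum (A ^ n) ∧ entrySum (A ^ n) ≤ C₂ * ρ ^ n)
    (T : Set ι)
    (hT : T = {i | matrixSpectralRadius (subMat A {j | f j = f i}) = ENNReal.ofReal ρ}) :
    matrixSpectralRadius (subMat A Tᶜ) < ENNReal.ofReal ρ ∧
    ∀ ρ' : ℝ, (matrixSpectralRadius (subMat A Tᶜ)).toReal < ρ' →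
      ∃ C : ℝ, 0 < C ∧ ∀ n : ℕ, 1 ≤ n → entrySum ((subMat A Tᶜ) ^ n) ≤ C * ρ' ^ n :=
  spectralRadius_outside_contributing_lt_general l f A hA htri C₁ C₂ ρ hρ hgrow T hT
end

section
/- Let A be a square complex matrix and ρ > 0, and suppose there is a constant C > 0 such that ‖A^n‖ ≤ C·ρ^n for all n ≥ 1 (for the operator norm, or any fixed matrix norm). Then every eigenvalue λ of A with |λ| = ρ is semisimple: the kernel of (A − λ·I)² equals the kernel of (A − λ·I). -/
attribute [local instance] Matrix.linftyOpNormedAddCommGroup Matrix.linftyOpNormedRing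

open scoped Matrix

/-- If the powers of a complex square matrix `A` satisfy `‖A^n‖ ≤ C ρ^n` (for a fixed matrix
norm, here the `L∞` operator norm), then every eigenvalue `λ` of `A` with `|λ| = ρ` is
semisimple: `ker (A - λI)² = ker (A - λI)`. -/
theorem peripheral_eigenvalue_semisimple
    {ι : Type*} [Fintype ι] [DecidableEq ι]
    (A : Matrix ι ι ℂ) (ρ : ℝ) (hρ : 0 < ρ)
    (C : ℝ) (hC : 0 < C) (hpow : ∀ n : ℕ, 1 ≤ n → ‖A ^ n‖ ≤ C * ρ ^ n)
    (lam : ℂ) (hlam : lam ∈ spectrum ℂ A) (hmod : ‖lam‖ = ρ) :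
    LinearMap.ker (((A - lam • (1 : Matrix ι ι ℂ)) ^ 2).mulVecLin) =
      LinearMap.ker ((A - lam • (1 : Matrix ι ι ℂ)).mulVecLin) := by
  set N := A - lam • (1 : Matrix ι ι ℂ) with hN
  apply le_antisymm
  swap
  · intro v hv
    simp only [LinearMap.mem_ker, Matrix.mulVecLin_apply] at hv ⊢
    rw [sq, ← Matrix.mulVec_mulVec, hv, Matrix.mulVec_zero]
  intro v hv
  simp only [LinearMap.mem_ker, Matrix.mulVecLin_apply] at hv ⊢
  set w := N *ᵥ v with hw
  have hNv : N *ᵥ v = A *ᵥ v - lam • v := by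
    rw [hN, Matrix.sub_mulVec, Matrix.smul_mulVec, Matrix.one_mulVec]
  have hNw' : N *ᵥ w = A *ᵥ w - lam • w := by
    rw [hN, Matrix.sub_mulVec, Matrix.smul_mulVec, Matrix.one_mulVec]
  have hNw : N *ᵥ w = 0 := by
    rw [hw, Matrix.mulVec_mulVec, ← sq, hv]
  have hAw : A *ᵥ w = lam • w := by
    have := hNw'.symm.trans hNw
    exact sub_eq_zero.mp this
  have hAv : A *ᵥ v = lam • v + w := by
    rw [hw, hNv]; abel
  -- key formula
  have key : ∀ n : ℕ, (A ^ (n + 1)) *ᵥ v = lam ^ (n + 1) • v + (((n : ℂ) + 1) * lam ^ n) • w := by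
    intro n
    induction n with
    | zero => simpa using hAv
    | succ n ih =>
      rw [pow_succ', ← Matrix.mulVec_mulVec, ih]
      rw [Matrix.mulVec_add, Matrix.mulVec_smul, Matrix.mulVec_smul, hAv, hAw]
      push_cast
      module
  -- norm bound
  have hbound : ∀ n : ℕ, ((n : ℝ) + 1) * ‖w‖ ≤ (C + 1) * ρ * ‖v‖ := by
    intro n
    have h1 : ‖(((n : ℂ) + 1) * lam ^ n) • w‖ = ((n : ℝ) + 1) * ρ ^ n * ‖w‖ := by
      rw [norm_smul, norm_mul, norm_pow, hmod]
      congr 2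
      rw [show ((n : ℂ) + 1) = ((n + 1 : ℕ) : ℂ) by push_cast; ring]
      rw [Complex.norm_natCast]
      push_cast; ring
    have h2 : (((n : ℂ) + 1) * lam ^ n) • w = (A ^ (n + 1)) *ᵥ v - lam ^ (n + 1) • v := by
      rw [key n]; abel
    have h3 : ‖(A ^ (n + 1)) *ᵥ v‖ ≤ C * ρ ^ (n + 1) * ‖v‖ := by
      calc ‖(A ^ (n + 1)) *ᵥ v‖ ≤ ‖A ^ (n + 1)‖ * ‖v‖ := Matrix.linfty_opNorm_mulVec _ _
        _ ≤ C * ρ ^ (n + 1) * ‖v‖ := by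
            apply mul_le_mul_of_nonneg_right (hpow _ (Nat.le_add_left 1 n)) (norm_nonneg v)
    have h4 : ‖lam ^ (n + 1) • v‖ = ρ ^ (n + 1) * ‖v‖ := by
      rw [norm_smul, norm_pow, hmod]
    have h5 : ((n : ℝ) + 1) * ρ ^ n * ‖w‖ ≤ (C + 1) * ρ ^ (n + 1) * ‖v‖ := by
      rw [← h1, h2]
      calc ‖(A ^ (n + 1)) *ᵥ v - lam ^ (n + 1) • v‖
          ≤ ‖(A ^ (n + 1)) *ᵥ v‖ + ‖lam ^ (n + 1) • v‖ := norm_sub_le _ _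
        _ ≤ C * ρ ^ (n + 1) * ‖v‖ + ρ ^ (n + 1) * ‖v‖ := by rw [h4]; linarith
        _ = (C + 1) * ρ ^ (n + 1) * ‖v‖ := by ring
    have hρn : 0 < ρ ^ n := pow_pos hρ n
    have := h5
    rw [pow_succ] at this
    nlinarith [this]
  -- conclude w = 0
  have hw0 : w = 0 := by
    by_contra hne
    have hwpos : 0 < ‖w‖ := norm_pos_iff.mpr hne
    obtain ⟨n, hn⟩ := exists_nat_gt ((C + 1) * ρ * ‖v‖ / ‖w‖)
    have := hbound n
    have h6 : ((n : ℝ) + 1) * ‖w‖ > (C + 1) * ρ * ‖v‖ := by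
      have : (C + 1) * ρ * ‖v‖ / ‖w‖ < (n : ℝ) + 1 := by linarith
      calc (C + 1) * ρ * ‖v‖ = ((C + 1) * ρ * ‖v‖ / ‖w‖) * ‖w‖ := by field_simp
        _ < ((n : ℝ) + 1) * ‖w‖ := by exact mul_lt_mul_of_pos_right this hwpos
    linarith
  rw [hw] at hw0
  exact hw0
end

section
/- Let E be a finite-dimensional complex normed vector space and T : E → E a continuous linear map with sup_{n ≥ 1} ‖T^n‖ < ∞. Then the Cesàro averages (1/N) Σ_{n=1}^{N} T^n converge as N → ∞ to a linear map P satisfying P² = P, T ∘ P = P ∘ T = P, the range of P is the fixed space ker(T − id), and the kernel of P is the range of (T − id). -/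
open Filter Topology Finset

/-!
The Cesàro means `A_N = N⁻¹ ∑_{n=1}^N T^n` of a power-bounded `T` telescope against `T - 1`:
`A_N (T - 1) = N⁻¹ (T^{N+1} - T) → 0`. Hence a vector of `range (T - 1)` fixed by `T` is zero,
and by rank–nullity `E = ker (T - 1) ⊕ range (T - 1)`. For the projection `P` onto the first
summand along the second, `A_N P = P` and `1 - P = (T - 1) S` for some `S`, so
`A_N = P + A_N (T - 1) S → P`.
-/

theorem sum_Icc_pow_mul_sub_one {R : Type*} [Ring R] (a : R) (N : ℕ) :
    (∑ n ∈ Icc 1 N, a ^ n) * (a - 1) = a ^ (N + 1) - a := by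
  induction N with
  | zero => simp
  | succ N ih =>
    rw [sum_Icc_succ_top (by omega), add_mul, ih, mul_sub, mul_one, ← pow_succ]
    abel

theorem pow_mul_eq_self_of_mul_eq_self {M : Type*} [Monoid M] {a p : M} (h : a * p = p)
    (n : ℕ) : a ^ n * p = p := by
  induction n with
  | zero => rw [pow_zero, one_mul]
  | succ n ih => rw [pow_succ', mul_assoc, ih, h]

section CesaroMean

variable (𝕜 : Type*) {A : Type*}

def cesaroMean [DivisionRing 𝕜] [Ring A] [Module 𝕜 A] (a : A) (N : ℕ) : A :=
  (N : 𝕜)⁻¹ • ∑ n ∈ Icc 1 N, a ^ n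

variable [RCLike 𝕜] [NormedRing A] [NormedAlgebra 𝕜 A]

theorem cesaroMean_mul_sub_one (a : A) (N : ℕ) :
    cesaroMean 𝕜 a N * (a - 1) = (N : 𝕜)⁻¹ • (a ^ (N + 1) - a) := by
  rw [cesaroMean, smul_mul_assoc, sum_Icc_pow_mul_sub_one]

theorem cesaroMean_mul_of_mul_eq_self {a p : A} (hp : a * p = p) {N : ℕ} (hN : N ≠ 0) :
    cesaroMean 𝕜 a N * p = p := by
  simp [cesaroMean, sum_mul, pow_mul_eq_self_of_mul_eq_self hp,
    ← Nat.cast_smul_eq_nsmul 𝕜, hN]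

theorem tendsto_cesaroMean_mul_sub_one {a : A} {C : ℝ}
    (hC : ∀ n, 1 ≤ n → ‖a ^ n‖ ≤ C) :
    Tendsto (fun N ↦ cesaroMean 𝕜 a N * (a - 1)) atTop (𝓝 0) := by
  simp_rw [cesaroMean_mul_sub_one]
  refine tendsto_inv_atTop_nhds_zero_nat.zero_smul_isBoundedUnder_le
    (isBoundedUnder_of ⟨C + C, fun N ↦ ?_⟩)
  exact (norm_sub_le _ _).trans (add_le_add (hC _ N.succ_pos) (by simpa using hC 1 le_rfl))

theorem tendsto_cesaroMean_of_mul_eq_self {a p s : A} {C : ℝ}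
    (hC : ∀ n, 1 ≤ n → ‖a ^ n‖ ≤ C) (hp : a * p = p) (hs : (a - 1) * s = 1 - p) :
    Tendsto (cesaroMean 𝕜 a) atTop (𝓝 p) := by
  have hsplit : ∀ᶠ N in atTop, p + cesaroMean 𝕜 a N * (a - 1) * s = cesaroMean 𝕜 a N := by
    filter_upwards [eventually_ne_atTop 0] with N hN
    rw [mul_assoc, hs, mul_sub, mul_one, cesaroMean_mul_of_mul_eq_self 𝕜 hp hN]
    abel
  simpa using (tendsto_const_nhds.add
    ((tendsto_cesaroMean_mul_sub_one 𝕜 hC).mul_const s)).congr' hsplit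

end CesaroMean

namespace ContinuousLinearMap

variable {𝕜 E : Type*} [RCLike 𝕜] [NormedAddCommGroup E] [NormedSpace 𝕜 E]

theorem cesaroMean_apply_of_apply_eq_self {T : E →L[𝕜] E} {x : E} (hx : T x = x) {N : ℕ}
    (hN : N ≠ 0) : cesaroMean 𝕜 T N x = x := by
  have hpow (n : ℕ) : (T ^ n) x = x :=
    (pow_apply_eq_iterate T n x).trans (Function.iterate_fixed hx n)
  simp [cesaroMean, hpow, ← Nat.cast_smul_eq_nsmul 𝕜, hN]

theorem disjoint_ker_range_sub_one {T : E →L[𝕜] E} {C : ℝ}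
    (hC : ∀ n, 1 ≤ n → ‖T ^ n‖ ≤ C) :
    Disjoint (LinearMap.ker ((T - 1 : E →L[𝕜] E) : E →ₗ[𝕜] E))
      (LinearMap.range ((T - 1 : E →L[𝕜] E) : E →ₗ[𝕜] E)) := by
  rw [Submodule.disjoint_def]
  rintro _ hx ⟨y, rfl⟩
  have hfix : T ((T - 1) y) = (T - 1) y := by
    simpa [sub_eq_zero] using hx
  have hlim : Tendsto (fun N ↦ cesaroMean 𝕜 T N ((T - 1) y)) atTop (𝓝 0) := by
    simpa only [Function.comp_def, apply_apply, mul_apply_eq_comp, zero_apply] using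
      ((apply 𝕜 E y).continuous.tendsto 0).comp (tendsto_cesaroMean_mul_sub_one 𝕜 hC)
  refine tendsto_nhds_unique (tendsto_const_nhds.congr' ?_) hlim
  filter_upwards [eventually_ne_atTop 0] with N hN
  exact (cesaroMean_apply_of_apply_eq_self hfix hN).symm

end ContinuousLinearMap

theorem LinearMap.isCompl_ker_range_of_disjoint {K V : Type*} [DivisionRing K] [AddCommGroup V]
    [Module K V] [FiniteDimensional K V] (f : V →ₗ[K] V)
    (h : Disjoint (LinearMap.ker f) (LinearMap.range f)) :
    IsCompl (LinearMap.ker f) (LinearMap.range f) :=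
  (Submodule.isCompl_iff_disjoint _ _
    ((finrank_range_add_finrank_ker f).symm.trans (add_comm _ _)).le).2 h

theorem ContinuousLinearMap.exists_comp_eq_of_range_le {𝕜 E F G : Type*}
    [NontriviallyNormedField 𝕜] [CompleteSpace 𝕜]
    [NormedAddCommGroup E] [NormedSpace 𝕜 E] [FiniteDimensional 𝕜 E]
    [NormedAddCommGroup F] [NormedSpace 𝕜 F] [NormedAddCommGroup G] [NormedSpace 𝕜 G]
    {A : F →L[𝕜] G} {B : E →L[𝕜] G}
    (h : LinearMap.range (B : E →ₗ[𝕜] G) ≤ LinearMap.range (A : F →ₗ[𝕜] G)) :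
    ∃ S : E →L[𝕜] F, A.comp S = B := by
  obtain ⟨S, hS⟩ := Module.projective_lifting_property (A : F →ₗ[𝕜] G).rangeRestrict
    ((B : E →ₗ[𝕜] G).codRestrict _ fun x ↦ h ⟨x, rfl⟩)
    (LinearMap.surjective_rangeRestrict _)
  exact ⟨LinearMap.toContinuousLinearMap S,
    ext fun x ↦ congrArg Subtype.val (LinearMap.congr_fun hS x)⟩

namespace LinearMap

variable {R E : Type*} [Ring R] [AddCommGroup E] [Module R E] {f : E →ₗ[R] E}

theorem comp_projection_ker_sub_one (h : IsCompl (ker (f - 1)) (range (f - 1))) :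
    f ∘ₗ (ker (f - 1)).projection (range (f - 1)) h =
      (ker (f - 1)).projection (range (f - 1)) h := by
  ext x
  have hx : _ ∈ ker (f - 1) := Submodule.projection_apply_mem h x
  rwa [mem_ker, sub_apply, Module.End.one_apply, sub_eq_zero] at hx

theorem projection_ker_sub_one_comp (h : IsCompl (ker (f - 1)) (range (f - 1))) :
    (ker (f - 1)).projection (range (f - 1)) h ∘ₗ f =
      (ker (f - 1)).projection (range (f - 1)) h := by
  ext x
  simpa [sub_eq_zero] using Submodule.projection_apply_of_mem_right h (mem_range_self (f - 1) x)

end LinearMap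

/-- Mean ergodic theorem for power-bounded operators on a finite-dimensional complex normed
space: if `sup_{n ≥ 1} ‖T^n‖ < ∞`, the Cesàro averages `(1/N) Σ_{n=1}^N T^n` converge in
operator norm to a projection `P` with `P² = P`, `TP = PT = P`, whose range is the fixed space
`ker (T - id)` and whose kernel is the range of `T - id`. -/
theorem mean_ergodic_theorem_finite_dimensional
    {E : Type*} [NormedAddCommGroup E] [NormedSpace ℂ E] [FiniteDimensional ℂ E]
    (T : E →L[ℂ] E) (C : ℝ) (hC : ∀ n : ℕ, 1 ≤ n → ‖T ^ n‖ ≤ C) :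
    ∃ P : E →L[ℂ] E,
      Filter.Tendsto (fun N : ℕ => (N : ℂ)⁻¹ • ∑ n ∈ Finset.Icc 1 N, T ^ n)
        Filter.atTop (nhds P) ∧
      P * P = P ∧ T * P = P ∧ P * T = P ∧
      LinearMap.range (P : E →ₗ[ℂ] E) = LinearMap.ker ((T - 1 : E →L[ℂ] E) : E →ₗ[ℂ] E) ∧
      LinearMap.ker (P : E →ₗ[ℂ] E) = LinearMap.range ((T - 1 : E →L[ℂ] E) : E →ₗ[ℂ] E) := by
  have hKR : IsCompl (LinearMap.ker ((T : E →ₗ[ℂ] E) - 1))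
      (LinearMap.range ((T : E →ₗ[ℂ] E) - 1)) :=
    LinearMap.isCompl_ker_range_of_disjoint _ (T.disjoint_ker_range_sub_one hC)
  set P : E →L[ℂ] E := LinearMap.toContinuousLinearMap (Submodule.projection _ _ hKR)
  have hTP : T * P = P :=
    ContinuousLinearMap.coe_injective (LinearMap.comp_projection_ker_sub_one hKR)
  have hPT : P * T = P :=
    ContinuousLinearMap.coe_injective (LinearMap.projection_ker_sub_one_comp hKR)
  obtain ⟨S, hS⟩ := ContinuousLinearMap.exists_comp_eq_of_range_le (A := T - 1) (B := 1 - P)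
    (by rintro _ ⟨x, rfl⟩; exact Submodule.sub_projection_mem hKR x)
  refine ⟨P, tendsto_cesaroMean_of_mul_eq_self ℂ hC hTP hS, ?_, hTP, hPT,
    Submodule.range_projection hKR, Submodule.ker_projection hKR⟩
  exact ContinuousLinearMap.coe_injective (Submodule.isIdempotentElem_projection hKR).eq
end

section
/- Let A be a square real matrix with nonnegative entries, indexed by a finite type, and suppose there exist C > 0 and ρ > 0 such that S(A^n) ≤ C·ρ^n for all n ≥ 1, where S(B) denotes the sum of all entries of B. Then the Cesàro averages of the normalized powers, (1/N) Σ_{n=1}^{N} ρ^{-n} A^n, converge entrywise as N → ∞. -/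
open scoped BigOperators

open Filter

/-- Mean ergodic theorem in finite dimension: Cesàro averages of a power-bounded
operator converge pointwise. -/
lemma mean_ergodic_aux {V : Type*} [NormedAddCommGroup V] [NormedSpace ℝ V]
    [FiniteDimensional ℝ V] (f : V →ₗ[ℝ] V) (K : ℝ)
    (hK : ∀ (n : ℕ) (x : V), ‖(f ^ n) x‖ ≤ K * ‖x‖) (x : V) :
    ∃ l : V, Tendsto (fun N : ℕ => (N : ℝ)⁻¹ • ∑ n ∈ Finset.Icc 1 N, (f ^ n) x)
      atTop (nhds l) := by
  set g : V →ₗ[ℝ] V := f - LinearMap.id with hg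
  have hfix : ∀ p : V, f p = p → ∀ n : ℕ, (f ^ n) p = p := by
    intro p hp n
    induction n with
    | zero => simp
    | succ n ih => rw [pow_succ, Module.End.mul_apply, hp, ih]
  -- telescoping identity
  have htel : ∀ (y : V) (N : ℕ),
      ∑ n ∈ Finset.Icc 1 N, (f ^ n) (g y) = (f ^ (N + 1)) y - f y := by
    intro y N
    have h1 : ∀ k : ℕ, (f ^ (k + 1)) (g y)
        = (f ^ (k + 1 + 1)) y - (f ^ (k + 1)) y := by
      intro k
      have h2 : (f ^ (k + 1 + 1)) y = (f ^ (k + 1)) (f y) := by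
        rw [pow_succ, Module.End.mul_apply]
      rw [hg]
      simp only [LinearMap.sub_apply, LinearMap.id_apply, map_sub, h2]
    have h3 : ∑ n ∈ Finset.Icc 1 N, (f ^ n) (g y)
        = ∑ k ∈ Finset.range N, (f ^ (k + 1)) (g y) := by
      rw [← Finset.Ico_add_one_right_eq_Icc, Finset.sum_Ico_eq_sum_range]
      simp [add_comm]
    rw [h3, Finset.sum_congr rfl fun k _ => h1 k]
    have h4 := Finset.sum_range_sub (fun m => (f ^ (m + 1)) y) N
    simpa using h4
  -- ker g and range g are disjoint
  have hdisj : ∀ z, z ∈ LinearMap.ker g → z ∈ LinearMap.range g → z = 0 := by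
    intro z hzk hzr
    have hfz : f z = z := by
      have := (LinearMap.mem_ker).mp hzk
      rw [hg] at this
      simpa [sub_eq_zero] using this
    obtain ⟨y, hy⟩ := hzr
    by_contra hz0
    have hzpos : 0 < ‖z‖ := norm_pos_iff.mpr hz0
    set B : ℝ := K * ‖y‖ + K * ‖y‖ with hB
    obtain ⟨N, hN⟩ := exists_nat_gt (B / ‖z‖)
    have hN1 : ∀ M : ℕ, (M : ℝ) * ‖z‖ ≤ B := by
      intro M
      have hsum : ∑ n ∈ Finset.Icc 1 M, (f ^ n) z = (M : ℕ) • z := by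
        rw [Finset.sum_congr rfl fun n _ => hfix z hfz n]
        simp [Nat.card_Icc]
      have hsum2 : ∑ n ∈ Finset.Icc 1 M, (f ^ n) z = (f ^ (M + 1)) y - f y := by
        rw [← hy]; exact htel y M
      have : (M : ℕ) • z = (f ^ (M + 1)) y - f y := by rw [← hsum, hsum2]
      have hnorm : ‖(M : ℕ) • z‖ ≤ B := by
        rw [this, hB]
        calc ‖(f ^ (M + 1)) y - f y‖ ≤ ‖(f ^ (M + 1)) y‖ + ‖f y‖ := norm_sub_le _ _
          _ ≤ K * ‖y‖ + K * ‖y‖ := by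
              gcongr
              · exact hK (M + 1) y
              · simpa using hK 1 y
      calc (M : ℝ) * ‖z‖ = ‖(M : ℕ) • z‖ := by
            rw [← Nat.cast_smul_eq_nsmul ℝ, norm_smul, Real.norm_natCast]
          _ ≤ B := hnorm
    have := hN1 N
    rw [div_lt_iff₀ hzpos] at hN
    linarith
  have hinf : LinearMap.ker g ⊓ LinearMap.range g = ⊥ := by
    rw [Submodule.eq_bot_iff]
    intro z hz
    exact hdisj z hz.1 hz.2
  have hsup : LinearMap.ker g ⊔ LinearMap.range g = ⊤ := by
    apply Submodule.eq_top_of_finrank_eq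
    have h1 := Submodule.finrank_sup_add_finrank_inf_eq (LinearMap.ker g)
      (LinearMap.range g)
    rw [hinf] at h1
    have h2 := LinearMap.finrank_range_add_finrank_ker g
    simp only [finrank_bot, add_zero] at h1
    omega
  -- decompose x
  have hxmem : x ∈ LinearMap.ker g ⊔ LinearMap.range g := hsup ▸ Submodule.mem_top
  obtain ⟨p, hp, r, hr, hpr⟩ := Submodule.mem_sup.mp hxmem
  refine ⟨p, ?_⟩
  have hfp : f p = p := by
    have := (LinearMap.mem_ker).mp hp
    rw [hg] at this
    simpa [sub_eq_zero] using this
  obtain ⟨y, hy⟩ := hr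
  -- Cesàro averages of p converge to p
  have h1 : Tendsto (fun N : ℕ => (N : ℝ)⁻¹ • ∑ n ∈ Finset.Icc 1 N, (f ^ n) p)
      atTop (nhds p) := by
    have heq : ∀ᶠ N : ℕ in atTop,
        p = (N : ℝ)⁻¹ • ∑ n ∈ Finset.Icc 1 N, (f ^ n) p := by
      filter_upwards [eventually_ge_atTop 1] with N hN
      have hsum : ∑ n ∈ Finset.Icc 1 N, (f ^ n) p = (N : ℕ) • p := by
        rw [Finset.sum_congr rfl fun n _ => hfix p hfp n]
        simp [Nat.card_Icc]
      rw [hsum, ← Nat.cast_smul_eq_nsmul ℝ, smul_smul,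
        inv_mul_cancel₀ (Nat.cast_ne_zero.mpr (by omega)), one_smul]
    exact Tendsto.congr' heq tendsto_const_nhds
  -- Cesàro averages of r converge to 0
  have h2 : Tendsto (fun N : ℕ => (N : ℝ)⁻¹ • ∑ n ∈ Finset.Icc 1 N, (f ^ n) r)
      atTop (nhds 0) := by
    refine squeeze_zero_norm (a := fun N : ℕ => (N : ℝ)⁻¹ * (K * ‖y‖ + K * ‖y‖)) ?_ ?_
    · intro N
      have hrsum : ∑ n ∈ Finset.Icc 1 N, (f ^ n) r = (f ^ (N + 1)) y - f y := by
        rw [← hy]; exact htel y N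
      rw [hrsum, norm_smul, norm_inv, Real.norm_natCast]
      apply mul_le_mul_of_nonneg_left _ (by positivity)
      calc ‖(f ^ (N + 1)) y - f y‖ ≤ ‖(f ^ (N + 1)) y‖ + ‖f y‖ := norm_sub_le _ _
        _ ≤ K * ‖y‖ + K * ‖y‖ := by
            gcongr
            · exact hK (N + 1) y
            · simpa using hK 1 y
    · have hinv : Tendsto (fun N : ℕ => (N : ℝ)⁻¹) atTop (nhds 0) :=
        tendsto_inv_atTop_nhds_zero_nat
      simpa using hinv.mul_const (K * ‖y‖ + K * ‖y‖)
  have hcomb : (fun N : ℕ => (N : ℝ)⁻¹ • ∑ n ∈ Finset.Icc 1 N, (f ^ n) x)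
      = fun N : ℕ => ((N : ℝ)⁻¹ • ∑ n ∈ Finset.Icc 1 N, (f ^ n) p)
        + ((N : ℝ)⁻¹ • ∑ n ∈ Finset.Icc 1 N, (f ^ n) r) := by
    funext N
    rw [← smul_add, ← Finset.sum_add_distrib]
    congr 1
    exact Finset.sum_congr rfl fun n _ => by rw [← hpr, map_add]
  rw [hcomb]
  simpa using h1.add h2

/-- If `A` is a nonnegative square matrix over a finite index type with `S(A^n) ≤ C ρ^n` for
all `n ≥ 1`, then the Cesàro averages `(1/N) Σ_{n=1}^N ρ^{-n} A^n` of the normalized powers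
converge entrywise as `N → ∞`. -/
theorem cesaro_averages_normalized_powers_converge
    {ι : Type*} [Fintype ι] [DecidableEq ι]
    (A : Matrix ι ι ℝ) (hA : ∀ i j, 0 ≤ A i j)
    (C ρ : ℝ) (hC : 0 < C) (hρ : 0 < ρ)
    (hgrow : ∀ n : ℕ, 1 ≤ n → entrySum (A ^ n) ≤ C * ρ ^ n) :
    ∃ L : Matrix ι ι ℝ, ∀ i j, Filter.Tendsto
      (fun N : ℕ => (N : ℝ)⁻¹ * ∑ n ∈ Finset.Icc 1 N, (ρ ^ n)⁻¹ * (A ^ n) i j)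
      Filter.atTop (nhds (L i j)) := by
  set T : Matrix ι ι ℝ := ρ⁻¹ • A with hT
  have hTpow : ∀ n : ℕ, T ^ n = (ρ ^ n)⁻¹ • A ^ n := by
    intro n
    rw [hT, smul_pow, inv_pow]
  have hApow : ∀ (n : ℕ) (i j : ι), 0 ≤ (A ^ n) i j := by
    intro n
    induction n with
    | zero => intro i j; simp [Matrix.one_apply]; split <;> norm_num
    | succ n ih =>
      intro i j
      rw [pow_succ, Matrix.mul_apply]
      exact Finset.sum_nonneg fun k _ => mul_nonneg (ih i k) (hA k j)
  have hentry : ∀ (n : ℕ) (i j : ι), (A ^ n) i j ≤ entrySum (A ^ n) := by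
    intro n i j
    unfold entrySum
    calc (A ^ n) i j ≤ ∑ j', (A ^ n) i j' :=
          Finset.single_le_sum (fun k _ => hApow n i k) (Finset.mem_univ j)
      _ ≤ ∑ i', ∑ j', (A ^ n) i' j' :=
          Finset.single_le_sum
            (fun k _ => Finset.sum_nonneg fun l _ => hApow n k l) (Finset.mem_univ i)
  set C' : ℝ := max C 1 with hC'
  have hTbound : ∀ (n : ℕ) (i j : ι), |(T ^ n) i j| ≤ C' := by
    intro n i j
    match n with
    | 0 =>
      rw [pow_zero, Matrix.one_apply]
      split
      · rw [abs_one]; exact le_max_right C 1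
      · rw [abs_zero]; exact le_trans zero_le_one (le_max_right C 1)
    | (m + 1) =>
      have h1 : (T ^ (m + 1)) i j = (ρ ^ (m + 1))⁻¹ * (A ^ (m + 1)) i j := by
        rw [hTpow]; simp
      have hnn : 0 ≤ (T ^ (m + 1)) i j := by
        rw [h1]
        exact mul_nonneg (by positivity) (hApow _ i j)
      rw [abs_of_nonneg hnn, h1]
      have h2 : (A ^ (m + 1)) i j ≤ C * ρ ^ (m + 1) :=
        le_trans (hentry (m + 1) i j) (hgrow (m + 1) (Nat.le_add_left 1 m))
      calc (ρ ^ (m + 1))⁻¹ * (A ^ (m + 1)) i j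
          ≤ (ρ ^ (m + 1))⁻¹ * (C * ρ ^ (m + 1)) := by
            apply mul_le_mul_of_nonneg_left h2 (by positivity)
        _ = C := by field_simp
        _ ≤ C' := le_max_left C 1
  -- the linear map
  set f : (ι → ℝ) →ₗ[ℝ] (ι → ℝ) := Matrix.mulVecLin T with hf
  have hfpow : ∀ n : ℕ, (f ^ n) = Matrix.mulVecLin (T ^ n) := by
    intro n
    induction n with
    | zero => rw [pow_zero, pow_zero, Matrix.mulVecLin_one]; rfl
    | succ n ih => rw [pow_succ, pow_succ, Matrix.mulVecLin_mul, ih]; rfl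
  have hK : ∀ (n : ℕ) (x : ι → ℝ),
      ‖(f ^ n) x‖ ≤ (C' * Fintype.card ι) * ‖x‖ := by
    intro n x
    rw [hfpow]
    have hnn : 0 ≤ (C' * Fintype.card ι) * ‖x‖ := by
      have : (0:ℝ) ≤ C' := le_trans zero_le_one (le_max_right C 1)
      positivity
    apply pi_norm_le_iff_of_nonneg hnn |>.mpr
    intro i
    calc ‖(T ^ n).mulVecLin x i‖ = |∑ j, (T ^ n) i j * x j| := by
          simp [Matrix.mulVecLin, Matrix.mulVec, dotProduct]
      _ ≤ ∑ j, |(T ^ n) i j * x j| := Finset.abs_sum_le_sum_abs _ _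
      _ ≤ ∑ _j : ι, C' * ‖x‖ := by
          apply Finset.sum_le_sum
          intro j _
          rw [abs_mul]
          apply mul_le_mul (hTbound n i j) (norm_le_pi_norm x j) (abs_nonneg _)
            (le_trans zero_le_one (le_max_right C 1))
      _ = (C' * Fintype.card ι) * ‖x‖ := by
          rw [Finset.sum_const, Finset.card_univ, nsmul_eq_mul]
          ring
  have hlim := fun j : ι => mean_ergodic_aux f (C' * Fintype.card ι) hK (Pi.single j 1)
  choose v hv using hlim
  refine ⟨fun i j => v j i, fun i j => ?_⟩
  have hcont := ((continuous_apply i).tendsto (v j)).comp (hv j)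
  apply hcont.congr
  intro N
  simp only [Function.comp_apply, Pi.smul_apply, Finset.sum_apply, smul_eq_mul]
  congr 1
  apply Finset.sum_congr rfl
  intro n _
  have h1 : (f ^ n) (Pi.single j 1) = (T ^ n).mulVec (Pi.single j 1) := by
    rw [hfpow]; rfl
  have h2 : (T ^ n).mulVec (Pi.single j 1) i = (T ^ n) i j := by
    simp [Matrix.mulVec, dotProduct, Pi.single_apply, mul_ite]
  rw [h1, h2, hTpow]
  simp
end

section
/- Let ι be a finite type, l a positive natural number, f : ι → Fin l, and let A be a square matrix over a (possibly noncommutative) ring, indexed by ι, that is block lower triangular with respect to f (A i j = 0 whenever f i < f j). Write A = D + Q where D is the block diagonal part of A (D i j = A i j if f i = f j, else 0) and Q = A − D. Then for every n ≥ 1, A^n = Σ_{k=0}^{min(n, l−1)} Σ_{(a₀,…,a_k) : a₀+⋯+a_k = n−k} D^{a₀} · Q · D^{a₁} · Q ⋯ Q · D^{a_k}, where the inner sum ranges over all (k+1)-tuples of nonnegative integers summing to n − k. -/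
/-!
Expanding `(D + Q)^n` noncommutatively gives the sum of all words in `D` and `Q` of length `n`;
grouping them by the number `k` of letters `Q` and recording the exponents of the runs of `D`
between them gives the inner sums of the statement. A word with `k` letters `Q` vanishes once
`k ≥ l`: `D` never decreases the block index `f` and `Q` strictly increases it, so a nonzero
entry of such a word would join two indices whose blocks differ by at least `l`.
-/

open Finset Finset.Nat

section WordSum

variable {S : Type*} [Semiring S]

theorem Finset.Nat.sum_antidiagonalTuple_succ {M : Type*} [AddCommMonoid M] (k m : ℕ)
    (g : (Fin (k + 1) → ℕ) → M) :
    ∑ a ∈ antidiagonalTuple (k + 1) m, g a =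
      ∑ p ∈ antidiagonal m, ∑ a ∈ antidiagonalTuple k p.2, g (Fin.cons p.1 a) := by
  rw [sum_sigma']
  refine (sum_bij' (fun x _ => Fin.cons x.1.1 x.2)
    (fun b _ => ⟨(b 0, ∑ i : Fin k, b i.succ), Fin.tail b⟩) ?_ ?_ ?_ ?_ ?_).symm
  · rintro ⟨⟨x, y⟩, a⟩ hx
    simp only [mem_sigma, HasAntidiagonal.mem_antidiagonal, mem_antidiagonalTuple] at hx ⊢
    simpa [Fin.sum_univ_succ, hx.2] using hx.1
  · intro b hb
    simp only [mem_sigma, HasAntidiagonal.mem_antidiagonal, mem_antidiagonalTuple] at hb ⊢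
    exact ⟨by rw [← hb, Fin.sum_univ_succ], rfl⟩
  · rintro ⟨⟨x, y⟩, a⟩ hx
    simp only [mem_sigma, HasAntidiagonal.mem_antidiagonal, mem_antidiagonalTuple] at hx
    simp [hx.2, Fin.tail_cons]
  · intro b _
    exact Fin.cons_self_tail b
  · intro _ _
    rfl

/-- The sum of all words in `d` and `q` with exactly `k` letters `q` and `m` letters `d`:
`a i` is the length of the `i`-th run of `d`. -/
def wordSum (d q : S) (k m : ℕ) : S :=
  ∑ a ∈ antidiagonalTuple (k + 1) m,
    d ^ (a 0) * (List.ofFn (fun i : Fin k => q * d ^ (a i.succ))).prod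

theorem wordSum_zero_left (d q : S) (m : ℕ) : wordSum d q 0 m = d ^ m := by
  simp [wordSum, antidiagonalTuple_one]

theorem wordSum_succ_left (d q : S) (k m : ℕ) :
    wordSum d q (k + 1) m = ∑ p ∈ antidiagonal m, d ^ p.1 * (q * wordSum d q k p.2) := by
  simp only [wordSum, sum_antidiagonalTuple_succ, List.ofFn_succ, Fin.cons_zero, Fin.cons_succ,
    List.prod_cons, mul_sum, mul_assoc]

theorem wordSum_zero_succ (d q : S) (m : ℕ) : wordSum d q 0 (m + 1) = d * wordSum d q 0 m := by
  rw [wordSum_zero_left, wordSum_zero_left, pow_succ']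

theorem wordSum_succ_zero (d q : S) (k : ℕ) : wordSum d q (k + 1) 0 = q * wordSum d q k 0 := by
  simp [wordSum_succ_left]

theorem wordSum_succ_succ (d q : S) (k m : ℕ) :
    wordSum d q (k + 1) (m + 1) = d * wordSum d q (k + 1) m + q * wordSum d q k (m + 1) := by
  rw [wordSum_succ_left, sum_antidiagonal_succ, wordSum_succ_left, mul_sum, add_comm]
  simp only [pow_zero, one_mul, pow_succ', mul_assoc]

theorem sum_antidiagonal_wordSum_succ (d q : S) (n : ℕ) :
    ∑ p ∈ antidiagonal (n + 1), wordSum d q p.1 p.2 =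
      (d + q) * ∑ p ∈ antidiagonal n, wordSum d q p.1 p.2 := by
  cases n with
  | zero => simp [sum_antidiagonal_succ, wordSum_zero_succ, wordSum_succ_zero, add_mul]
  | succ m =>
    calc ∑ p ∈ antidiagonal (m + 1 + 1), wordSum d q p.1 p.2
        = wordSum d q (m + 1 + 1) 0 + wordSum d q 0 (m + 1 + 1) +
            ∑ p ∈ antidiagonal m, wordSum d q (p.1 + 1) (p.2 + 1) := by
          rw [sum_antidiagonal_succ', sum_antidiagonal_succ]
          exact (add_assoc _ _ _).symm
      _ = d * (wordSum d q 0 (m + 1) + ∑ p ∈ antidiagonal m, wordSum d q (p.1 + 1) p.2) +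
            q * (wordSum d q (m + 1) 0 + ∑ p ∈ antidiagonal m, wordSum d q p.1 (p.2 + 1)) := by
          simp only [wordSum_succ_succ, wordSum_zero_succ, wordSum_succ_zero, mul_add, mul_sum,
            sum_add_distrib]
          abel
      _ = (d + q) * ∑ p ∈ antidiagonal (m + 1), wordSum d q p.1 p.2 := by
          rw [add_mul]
          nth_rw 1 [sum_antidiagonal_succ]
          rw [sum_antidiagonal_succ']

theorem add_pow_eq_sum_wordSum (d q : S) (n : ℕ) :
    (d + q) ^ n = ∑ p ∈ antidiagonal n, wordSum d q p.1 p.2 := by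
  induction n with
  | zero => simp [wordSum_zero_left]
  | succ n ih => rw [pow_succ', ih, sum_antidiagonal_wordSum_succ]

end WordSum

namespace Matrix

variable {ι R : Type*}

/-- For `c = 0` this is `BlockTriangular M (OrderDual.toDual ∘ f)`; `c = 1` is its strict version. -/
def LowersBlockBy [Zero R] (f : ι → ℕ) (c : ℕ) (M : Matrix ι ι R) : Prop :=
  ∀ i j, f i < f j + c → M i j = 0

variable {f : ι → ℕ}

theorem lowersBlockBy_one [DecidableEq ι] [Zero R] [One R] :
    LowersBlockBy f 0 (1 : Matrix ι ι R) :=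
  fun i j hij => one_apply_ne (by rintro rfl; omega)

theorem LowersBlockBy.mul [Fintype ι] [NonUnitalNonAssocSemiring R] {c e : ℕ}
    {M N : Matrix ι ι R} (hM : LowersBlockBy f c M) (hN : LowersBlockBy f e N) :
    LowersBlockBy f (c + e) (M * N) := by
  intro i j hij
  rw [mul_apply]
  refine sum_eq_zero fun t _ => ?_
  by_cases hit : f i < f t + c
  · rw [hM i t hit, zero_mul]
  · rw [hN t j (by omega), mul_zero]

theorem LowersBlockBy.list_prod [Fintype ι] [DecidableEq ι] [Semiring R] {c : ℕ}
    {L : List (Matrix ι ι R)} (hL : ∀ M ∈ L, LowersBlockBy f c M) :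
    LowersBlockBy f (L.length * c) L.prod := by
  induction L with
  | nil => simpa using lowersBlockBy_one
  | cons M L ih =>
    rw [List.prod_cons, List.length_cons, add_mul, one_mul, add_comm]
    exact (hL M List.mem_cons_self).mul (ih fun N hN => hL N (List.mem_cons_of_mem M hN))

theorem LowersBlockBy.pow [Fintype ι] [DecidableEq ι] [Semiring R] {c : ℕ}
    {M : Matrix ι ι R} (hM : LowersBlockBy f c M) (a : ℕ) : LowersBlockBy f (a * c) (M ^ a) := by
  simpa [List.prod_replicate] using
    LowersBlockBy.list_prod (L := List.replicate a M) fun N hN => List.eq_of_mem_replicate hN ▸ hM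

theorem LowersBlockBy.eq_zero [Zero R] {c : ℕ} {M : Matrix ι ι R} (hM : LowersBlockBy f c M)
    (hf : ∀ i, f i < c) : M = 0 :=
  ext fun i j => hM i j (by have := hf i; omega)

theorem wordSum_eq_zero [Fintype ι] [DecidableEq ι] [Semiring R] {D Q : Matrix ι ι R}
    (hD : LowersBlockBy f 0 D) (hQ : LowersBlockBy f 1 Q) {k : ℕ} (hf : ∀ i, f i < k) (m : ℕ) :
    wordSum D Q k m = 0 := by
  refine sum_eq_zero fun a _ => LowersBlockBy.eq_zero ?_ (c := 0 + k) (by simpa using hf)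
  refine (hD.pow _).mul ?_
  simpa using LowersBlockBy.list_prod (L := List.ofFn fun i : Fin k => Q * D ^ (a i.succ))
    (c := 1) (by simpa using fun i : Fin k => hQ.mul (hD.pow (a i.succ)))

end Matrix

open Matrix

theorem pow_blockTriangular_expansion_general
    {R : Type*} [Ring R] {ι : Type*} [Fintype ι] [DecidableEq ι]
    (l : ℕ) (f : ι → Fin l)
    (A D Q : Matrix ι ι R)
    (htri : ∀ i j, f i < f j → A i j = 0)
    (hD : ∀ i j, D i j = if f i = f j then A i j else 0)
    (hQ : Q = A - D)
    (n : ℕ) :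
    A ^ n = ∑ k ∈ Finset.range (min n (l - 1) + 1),
      ∑ a ∈ Finset.Nat.antidiagonalTuple (k + 1) (n - k),
        D ^ (a 0) * (List.ofFn (fun i : Fin k => Q * D ^ (a i.succ))).prod := by
  have hD₀ : LowersBlockBy (fun i => f i) 0 D := fun i j hij => by
    rw [hD, if_neg (Fin.ne_of_lt (by simpa using hij))]
  have hQ₁ : LowersBlockBy (fun i => f i) 1 Q := fun i j hij => by
    rcases (Nat.lt_succ_iff.mp hij).lt_or_eq with hlt | heq
    · simp [hQ, hD, htri i j hlt]
    · simp [hQ, hD, Fin.ext heq]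
  have hA : A = D + Q := by rw [hQ, add_sub_cancel]
  rw [hA, add_pow_eq_sum_wordSum, sum_antidiagonal_eq_sum_range_succ_mk]
  refine (sum_subset (range_subset_range.2 (by omega)) fun k hk hk' => ?_).symm
  simp only [mem_range] at hk hk'
  exact wordSum_eq_zero hD₀ hQ₁ (fun i => by have := (f i).isLt; omega) _

/-- Expansion of powers of a block lower triangular matrix `A = D + Q` (with `D` its block
diagonal part and `Q` strictly block lower triangular) into alternating products: for `n ≥ 1`,
`A^n = Σ_{k=0}^{min(n, l-1)} Σ_{a₀+⋯+a_k = n-k} D^{a₀} Q D^{a₁} Q ⋯ Q D^{a_k}`. -/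
theorem pow_blockTriangular_expansion
    {R : Type*} [Ring R] {ι : Type*} [Fintype ι] [DecidableEq ι]
    (l : ℕ) (hl : 0 < l) (f : ι → Fin l)
    (A D Q : Matrix ι ι R)
    (htri : ∀ i j, f i < f j → A i j = 0)
    (hD : ∀ i j, D i j = if f i = f j then A i j else 0)
    (hQ : Q = A - D)
    (n : ℕ) (hn : 1 ≤ n) :
    A ^ n = ∑ k ∈ Finset.range (min n (l - 1) + 1),
      ∑ a ∈ Finset.Nat.antidiagonalTuple (k + 1) (n - k),
        D ^ (a 0) * (List.ofFn (fun i : Fin k => Q * D ^ (a i.succ))).prod :=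
  pow_blockTriangular_expansion_general l f A D Q htri hD hQ n
end
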